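/- Let U be an open subset of the set of ordered pairs (v, w) of orthonormal vectors in ℝ³, and let f : ℝ³ → ℝ be C¹ on an open neighbourhood of ℙ₁U ∪ ℙ₂U. Suppose that for every (v, w) ∈ U and every θ ∈ ℝ with (v cos θ + w sin θ, −v sin θ + w cos θ) ∈ U, one has f(v cos θ + w sin θ) + f(−v sin θ + w cos θ) = f(v) + f(w). Then for every (v, w) ∈ U, w·∇f(v) − v·∇f(w) = 0. -/

import Mathlib

open Matrix

/-- The set of ordered pairs of orthonormal vectors in `ℝ³`. -/
def OrthonormalPairsR3 : Set ((Fin 3 → ℝ) × (Fin 3 → ℝ)) :=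
  {p | p.1 ⬝ᵥ p.1 = 1 ∧ p.2 ⬝ᵥ p.2 = 1 ∧ p.1 ⬝ᵥ p.2 = 0}

open Real Filter Topology

/-
Rotating the pair `(v, w)` by `θ` in the plane it spans keeps it orthonormal, so for `θ` near `0`
the rotated pair stays in the relatively open set `U` and `θ ↦ f(v cos θ + w sin θ) +
f(-v sin θ + w cos θ)` is constant near `0`. Its derivative at `0`, computed by the chain rule
from the velocities `w` and `-v` of the two rotated vectors, is `∇f(v)·w − ∇f(w)·v`.
-/

section Rotation

variable {E : Type*} [NormedAddCommGroup E] [NormedSpace ℝ E]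

theorem hasDerivAt_cos_smul_add_sin_smul (v w : E) :
    HasDerivAt (fun θ : ℝ => cos θ • v + sin θ • w) w 0 := by
  simpa [Pi.add_def] using
    ((hasDerivAt_cos 0).smul_const v).add ((hasDerivAt_sin 0).smul_const w)

theorem hasDerivAt_neg_sin_smul_add_cos_smul (v w : E) :
    HasDerivAt (fun θ : ℝ => -sin θ • v + cos θ • w) (-v) 0 := by
  simpa [Pi.add_def] using
    ((hasDerivAt_sin 0).neg.smul_const v).add ((hasDerivAt_cos 0).smul_const w)

theorem hasDerivAt_rotation_sum {f : E → ℝ} {v w : E}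
    (hv : DifferentiableAt ℝ f v) (hw : DifferentiableAt ℝ f w) :
    HasDerivAt (fun θ : ℝ => f (cos θ • v + sin θ • w) + f (-sin θ • v + cos θ • w))
      (fderiv ℝ f v w - fderiv ℝ f w v) 0 := by
  have h₁ := hv.hasFDerivAt.comp_hasDerivAt_of_eq 0 (hasDerivAt_cos_smul_add_sin_smul v w)
    (by simp)
  have h₂ := hw.hasFDerivAt.comp_hasDerivAt_of_eq 0 (hasDerivAt_neg_sin_smul_add_cos_smul v w)
    (by simp)
  simpa [sub_eq_add_neg, Pi.add_def, Function.comp_def] using h₁.add h₂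

theorem eventually_rotation_mem_of_isOpen {U₀ : Set (E × E)} (hU₀ : IsOpen U₀) {v w : E}
    (hvw : (v, w) ∈ U₀) :
    ∀ᶠ θ in 𝓝 (0 : ℝ), (cos θ • v + sin θ • w, -sin θ • v + cos θ • w) ∈ U₀ := by
  have hcont : Continuous fun θ : ℝ => (cos θ • v + sin θ • w, -sin θ • v + cos θ • w) := by
    fun_prop
  exact hcont.continuousAt.preimage_mem_nhds (by simpa using hU₀.mem_nhds hvw)

end Rotation

theorem rotation_mem_orthonormalPairsR3 {v w : Fin 3 → ℝ} (h : (v, w) ∈ OrthonormalPairsR3)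
    (θ : ℝ) : (cos θ • v + sin θ • w, -sin θ • v + cos θ • w) ∈ OrthonormalPairsR3 := by
  obtain ⟨hvv, hww, hvw⟩ : v ⬝ᵥ v = 1 ∧ w ⬝ᵥ w = 1 ∧ v ⬝ᵥ w = 0 := h
  have hwv : w ⬝ᵥ v = 0 := by rw [dotProduct_comm, hvw]
  have hpyth := sin_sq_add_cos_sq θ
  refine ⟨?_, ?_, ?_⟩ <;>
    simp only [add_dotProduct, dotProduct_add, smul_dotProduct, dotProduct_smul, smul_eq_mul,
      hvv, hww, hvw, hwv]
  · linear_combination hpyth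
  · linear_combination hpyth
  · ring

/-- Let `U` be an open subset of the set of ordered pairs of orthonormal vectors of `ℝ³`,
and let `f` be `C¹` on an open neighbourhood of `ℙ₁U ∪ ℙ₂U`. If `f(v) + f(w)` is invariant
under rotations of the orthonormal pair `(v, w)` within `U`, then
`w·∇f(v) − v·∇f(w) = 0` for every `(v, w) ∈ U` (Eq. (31) of the paper). -/
theorem rotation_generator_identity (U : Set ((Fin 3 → ℝ) × (Fin 3 → ℝ)))
    (hUopen : ∃ U₀ : Set ((Fin 3 → ℝ) × (Fin 3 → ℝ)),
      IsOpen U₀ ∧ U = U₀ ∩ OrthonormalPairsR3)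
    (W : Set (Fin 3 → ℝ)) (hWopen : IsOpen W)
    (hWsub : (Prod.fst '' U ∪ Prod.snd '' U) ⊆ W)
    (f : (Fin 3 → ℝ) → ℝ) (hf : ContDiffOn ℝ 1 f W)
    (hrot : ∀ v w : Fin 3 → ℝ, (v, w) ∈ U → ∀ θ : ℝ,
      (Real.cos θ • v + Real.sin θ • w, -(Real.sin θ) • v + Real.cos θ • w) ∈ U →
      f (Real.cos θ • v + Real.sin θ • w) + f (-(Real.sin θ) • v + Real.cos θ • w)
        = f v + f w) :
    ∀ v w : Fin 3 → ℝ, (v, w) ∈ U →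
      fderiv ℝ f v w - fderiv ℝ f w v = 0 := by
  obtain ⟨U₀, hU₀, rfl⟩ := hUopen
  intro v w hvw
  have hdiff : ∀ x ∈ W, DifferentiableAt ℝ f x := fun x hx =>
    (hf.differentiableOn one_ne_zero).differentiableAt (hWopen.mem_nhds hx)
  have hv := hdiff v (hWsub (Or.inl ⟨(v, w), hvw, rfl⟩))
  have hw := hdiff w (hWsub (Or.inr ⟨(v, w), hvw, rfl⟩))
  have hconst : ∀ᶠ θ in 𝓝 (0 : ℝ),
      f (cos θ • v + sin θ • w) + f (-sin θ • v + cos θ • w) = f v + f w := by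
    filter_upwards [eventually_rotation_mem_of_isOpen hU₀ hvw.1] with θ hθ
    exact hrot v w hvw θ ⟨hθ, rotation_mem_orthonormalPairsR3 hvw.2 θ⟩
  exact (hasDerivAt_rotation_sum hv hw).unique
    ((hasDerivAt_const (0 : ℝ) (f v + f w)).congr_of_eventuallyEq hconst)
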